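/- arXiv:1405.7022 — 3 statements merged into one kernel-verified Lean document; each statement's English description precedes it below -/
import Mathlib

section
/- For every ε > 0 and every κ ≥ 1 there exists a constant K > 0 such that for all reals A, B, C ≥ 1 and all reals D ≥ 0 with D ≤ κ·min(B², A·C), one has U(A,B,C,D) ≤ K · (A·(1 + √D) + B·(1 + D)·(A·C)^{ε}). -/
/-!
Split the triples according to whether `c = 0`. If `c = 0` then `b² ≤ D`, which leaves
`O(A (1 + √D))` triples. If `c ≠ 0`, the pair `(b, b² - ac)` takes `O(B (1 + D))` values, and
each determines `ac ≠ 0` with `|ac| ≤ AC`; then `a` is one of the `2 d(|ac|) ≪_ε (AC)^ε`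
integer divisors of `ac`, and `a` determines `c`.

The divisor bound comes from `d(n) / n^ε = ∏_{p^k ∥ n} (k + 1) / p^{kε}`: a factor can exceed `1`
only when `p < 2^{1/ε}`, and each such factor is bounded uniformly in `k`.
-/

noncomputable def U (A B C D : ℝ) : ℕ :=
  Set.ncard {t : ℤ × ℤ × ℤ |
    1 ≤ |t.1| ∧ (|t.1| : ℝ) ≤ A ∧ (|t.2.1| : ℝ) ≤ B ∧ (|t.2.2| : ℝ) ≤ C ∧
      (|t.2.1 ^ 2 - t.1 * t.2.2| : ℝ) ≤ D}

open Finset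

lemma exists_add_one_le_mul_pow {c : ℝ} (hc : 1 < c) :
    ∃ M : ℝ, 1 ≤ M ∧ ∀ k : ℕ, (k : ℝ) + 1 ≤ M * c ^ k := by
  set M := max 1 (c - 1)⁻¹
  have hM : 1 ≤ M := le_max_left _ _
  have hMc : 1 ≤ M * (c - 1) :=
    calc 1 = (c - 1)⁻¹ * (c - 1) := (inv_mul_cancel₀ (by linarith)).symm
      _ ≤ M * (c - 1) := by gcongr; exact le_max_right _ _
  refine ⟨M, hM, fun k => ?_⟩
  have hbernoulli : 1 + (k : ℝ) * (c - 1) ≤ c ^ k := by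
    simpa using one_add_mul_le_pow (a := c - 1) (by linarith) k
  calc (k : ℝ) + 1 ≤ M * (1 + k * (c - 1)) := by
        nlinarith [mul_le_mul_of_nonneg_left hMc (Nat.cast_nonneg (α := ℝ) k)]
    _ ≤ M * c ^ k := by gcongr

lemma add_one_le_pow_of_two_le {x : ℝ} (hx : 2 ≤ x) (k : ℕ) : (k : ℝ) + 1 ≤ x ^ k :=
  calc (k : ℝ) + 1 ≤ 2 ^ k := by exact_mod_cast Nat.lt_two_pow_self
    _ ≤ x ^ k := by gcongr

lemma Nat.rpow_eq_prod_primeFactors {n : ℕ} (hn : n ≠ 0) (ε : ℝ) :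
    (n : ℝ) ^ ε = ∏ p ∈ n.primeFactors, ((p : ℝ) ^ ε) ^ n.factorization p := by
  conv_lhs => rw [← Nat.prod_factorization_pow_eq_self hn]
  rw [Nat.prod_factorization_eq_prod_primeFactors, Nat.cast_prod,
    ← Real.finsetProd_rpow _ _ fun p _ => by positivity]
  refine prod_congr rfl fun p _ => ?_
  rw [Nat.cast_pow, ← Real.rpow_natCast, ← Real.rpow_natCast, ← Real.rpow_mul, ← Real.rpow_mul,
    mul_comm] <;> positivity

lemma Nat.exists_card_divisors_le_mul_rpow {ε : ℝ} (hε : 0 < ε) :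
    ∃ K : ℝ, 1 ≤ K ∧ ∀ n : ℕ, n ≠ 0 → (#n.divisors : ℝ) ≤ K * (n : ℝ) ^ ε := by
  have h2ε : (1 : ℝ) < 2 ^ ε := Real.one_lt_rpow (by norm_num) hε
  obtain ⟨M, hM, hkM⟩ := exists_add_one_le_mul_pow h2ε
  set N := ⌈(2 : ℝ) ^ ε⁻¹⌉₊
  -- only the primes below `2 ^ (1/ε)` have `p ^ ε < 2`, and they contribute a factor `M` each
  have local_bound : ∀ p : ℕ, p.Prime → ∀ k : ℕ,
      (k : ℝ) + 1 ≤ (if p < N then M else 1) * ((p : ℝ) ^ ε) ^ k := by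
    intro p hp k
    have hp2 : (2 : ℝ) ≤ p := by exact_mod_cast hp.two_le
    split_ifs with hpN
    · calc (k : ℝ) + 1 ≤ M * (2 ^ ε) ^ k := hkM k
        _ ≤ M * ((p : ℝ) ^ ε) ^ k := by gcongr
    · have : (2 : ℝ) ^ ε⁻¹ ≤ p := (Nat.le_ceil _).trans (by exact_mod_cast not_lt.mp hpN)
      have h2p : 2 ≤ (p : ℝ) ^ ε := by
        simpa [← Real.rpow_mul, hε.ne'] using Real.rpow_le_rpow (by positivity) this hε.le
      simpa using add_one_le_pow_of_two_le h2p k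
  refine ⟨M ^ N, one_le_pow₀ hM, fun n hn => ?_⟩
  rw [Nat.card_divisors hn, Nat.rpow_eq_prod_primeFactors hn, Nat.cast_prod]
  calc ∏ p ∈ n.primeFactors, ((n.factorization p + 1 : ℕ) : ℝ)
      ≤ ∏ p ∈ n.primeFactors, (if p < N then M else 1) * ((p : ℝ) ^ ε) ^ n.factorization p :=
        prod_le_prod (fun _ _ => by positivity) fun p hp => by
          exact_mod_cast local_bound p (Nat.prime_of_mem_primeFactors hp) _
    _ ≤ M ^ N * ∏ p ∈ n.primeFactors, ((p : ℝ) ^ ε) ^ n.factorization p := by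
        rw [prod_mul_distrib, prod_ite, prod_const, prod_const, one_pow, mul_one]
        gcongr
        exact (card_le_card fun p hp => mem_range.mpr (mem_filter.mp hp).2).trans
            (card_range N).le

lemma Int.card_divisors (z : ℤ) : #z.divisors = 2 * #z.natAbs.divisors := by
  rw [Int.divisors, card_disjUnion, card_map, card_map, two_mul]

lemma Int.exists_card_divisors_le_mul_rpow {ε : ℝ} (hε : 0 < ε) :
    ∃ K : ℝ, 1 ≤ K ∧ ∀ z : ℤ, (#z.divisors : ℝ) ≤ K * |(z : ℝ)| ^ ε := by
  obtain ⟨K, hK, hdiv⟩ := Nat.exists_card_divisors_le_mul_rpow hε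
  refine ⟨2 * K, by linarith, fun z => ?_⟩
  rcases eq_or_ne z 0 with rfl | hz
  · simp [Real.zero_rpow hε.ne']
  · rw [Int.card_divisors, ← Int.cast_abs, ← Int.natCast_natAbs, Int.cast_natCast, mul_assoc]
    push_cast
    exact mul_le_mul_of_nonneg_left (hdiv _ (Int.natAbs_ne_zero.mpr hz)) zero_le_two

noncomputable def absLeFinset (x : ℝ) : Finset ℤ := Icc (-⌊x⌋) ⌊x⌋

lemma mem_absLeFinset {n : ℤ} {x : ℝ} : n ∈ absLeFinset x ↔ |(n : ℝ)| ≤ x := by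
  rw [absLeFinset, mem_Icc, ← abs_le, Int.le_floor, Int.cast_abs]

lemma card_absLeFinset_le {x : ℝ} (hx : 0 ≤ x) : (#(absLeFinset x) : ℝ) ≤ 2 * x + 1 := by
  have hfloor : (0 : ℤ) ≤ ⌊x⌋ := Int.floor_nonneg.mpr hx
  rw [absLeFinset, Int.card_Icc, show ⌊x⌋ + 1 - -⌊x⌋ = ((2 * ⌊x⌋.toNat + 1 : ℕ) : ℤ) by omega,
    Int.toNat_natCast]
  have hcast : ((⌊x⌋.toNat : ℕ) : ℝ) = ⌊x⌋ := by exact_mod_cast Int.toNat_of_nonneg hfloor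
  push_cast
  linarith [Int.floor_le x]

def UTriples (A B C D : ℝ) : Set (ℤ × ℤ × ℤ) :=
  {t | 1 ≤ |t.1| ∧ (|t.1| : ℝ) ≤ A ∧ (|t.2.1| : ℝ) ≤ B ∧ (|t.2.2| : ℝ) ≤ C ∧
      (|t.2.1 ^ 2 - t.1 * t.2.2| : ℝ) ≤ D}

lemma U_eq_ncard_UTriples (A B C D : ℝ) : U A B C D = (UTriples A B C D).ncard := rfl

section Counting

variable {A B C D : ℝ}

lemma ncard_UTriples_snd_snd_eq_zero_le (hA : 0 ≤ A) :
    ({t ∈ UTriples A B C D | t.2.2 = 0}.ncard : ℝ) ≤ (2 * A + 1) * (2 * √D + 1) := by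
  have hinj : {t ∈ UTriples A B C D | t.2.2 = 0}.ncard ≤
      (↑(absLeFinset A ×ˢ absLeFinset √D) : Set (ℤ × ℤ)).ncard := by
    refine Set.ncard_le_ncard_of_injOn (fun t => (t.1, t.2.1)) ?_ ?_
    · rintro ⟨a, b, c⟩ ⟨⟨-, ha, -, -, hbD⟩, rfl : c = 0⟩
      simp only [coe_product, Set.mem_prod, mem_coe, mem_absLeFinset]
      refine ⟨ha, Real.abs_le_sqrt ?_⟩
      simpa using hbD
    · rintro ⟨a, b, c⟩ ⟨-, rfl : c = 0⟩ ⟨a', b', c'⟩ ⟨-, rfl : c' = 0⟩ h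
      simp_all
  rw [Set.ncard_coe_finset, card_product] at hinj
  calc _ ≤ ((#(absLeFinset A) * #(absLeFinset √D) : ℕ) : ℝ) := by exact_mod_cast hinj
    _ ≤ _ := by
      push_cast
      gcongr
      · exact card_absLeFinset_le hA
      · exact card_absLeFinset_le (Real.sqrt_nonneg D)

/-- With `b` and `v = b² - ac` fixed, `a` is a divisor of `ac ≠ 0`, which determines `c`. -/
lemma ncard_UTriples_snd_snd_ne_zero_le {K ε : ℝ} (hK₀ : 0 ≤ K) (hε : 0 ≤ ε)
    (hK : ∀ z : ℤ, (#z.divisors : ℝ) ≤ K * |(z : ℝ)| ^ ε)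
    (hA : 0 ≤ A) (hB : 0 ≤ B) (hC : 0 ≤ C) (hD : 0 ≤ D) :
    ({t ∈ UTriples A B C D | t.2.2 ≠ 0}.ncard : ℝ) ≤
      (2 * B + 1) * (2 * D + 1) * (K * (A * C) ^ ε) := by
  set Q := absLeFinset B ×ˢ absLeFinset D
  set Q' := {q ∈ Q | |((q.1 ^ 2 - q.2 : ℤ) : ℝ)| ≤ A * C}
  have hinj : {t ∈ UTriples A B C D | t.2.2 ≠ 0}.ncard ≤
      (↑(Q'.sigma fun q => (q.1 ^ 2 - q.2).divisors) : Set ((_ : ℤ × ℤ) × ℤ)).ncard := by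
    refine Set.ncard_le_ncard_of_injOn
      (fun t => ⟨(t.2.1, t.2.1 ^ 2 - t.1 * t.2.2), t.1⟩) ?_ ?_
    · rintro ⟨a, b, c⟩ ⟨⟨ha, hA, hb, hC, hv⟩, hc⟩
      simp only [Q', Q, coe_sigma, Set.mem_sigma_iff, mem_coe, mem_filter, mem_product,
        mem_absLeFinset, sub_sub_cancel, Int.mem_divisors]
      refine ⟨⟨⟨hb, by push_cast; exact hv⟩, ?_⟩, dvd_mul_right a c,
        mul_ne_zero (abs_pos.mp (one_pos.trans_le ha)) hc⟩
      push_cast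
      rw [abs_mul]
      exact mul_le_mul hA hC (abs_nonneg _) ((abs_nonneg _).trans hA)
    · rintro ⟨a, b, c⟩ ⟨⟨ha, -⟩, -⟩ ⟨a', b', c'⟩ - h
      simp only [Sigma.mk.inj_iff, Prod.mk.injEq, heq_eq_eq] at h
      obtain ⟨⟨rfl, hv⟩, rfl⟩ := h
      have : c = c' := mul_left_cancel₀ (abs_pos.mp (one_pos.trans_le ha)) (by linarith)
      rw [this]
  rw [Set.ncard_coe_finset, card_sigma] at hinj
  calc _ ≤ ((∑ q ∈ Q', #(q.1 ^ 2 - q.2).divisors : ℕ) : ℝ) := by exact_mod_cast hinj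
    _ ≤ ∑ q ∈ Q', K * (A * C) ^ ε := by
      push_cast
      refine sum_le_sum fun q hq => (hK _).trans ?_
      gcongr
      exact (mem_filter.mp hq).2
    _ ≤ #Q * (K * (A * C) ^ ε) := by
      rw [sum_const, nsmul_eq_mul]
      gcongr
      exact filter_subset _ _
    _ ≤ _ := by
      rw [card_product]
      push_cast
      gcongr
      · exact card_absLeFinset_le hB
      · exact card_absLeFinset_le hD

end Counting

lemma two_mul_add_one_mul_two_mul_add_one_le {x y : ℝ} (hx : 1 ≤ x) (hy : 0 ≤ y) :
    (2 * x + 1) * (2 * y + 1) ≤ 9 * (x * (1 + y)) := by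
  nlinarith

/-- For every `ε > 0` and `κ ≥ 1` there is `K > 0` such that for all `A, B, C ≥ 1` and
`0 ≤ D ≤ κ min(B², AC)`:
`U(A,B,C,D) ≤ K (A(1 + √D) + B(1 + D)(AC)^ε)`. -/
theorem quadratic_form_count_bound :
    ∀ ε : ℝ, 0 < ε → ∀ κ : ℝ, 1 ≤ κ → ∃ K : ℝ, 0 < K ∧
      ∀ A B C D : ℝ, 1 ≤ A → 1 ≤ B → 1 ≤ C → 0 ≤ D → D ≤ κ * min (B ^ 2) (A * C) →
        (U A B C D : ℝ) ≤
          K * (A * (1 + Real.sqrt D) + B * (1 + D) * (A * C) ^ ε) := by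
  intro ε hε κ _
  obtain ⟨K, hK, hdiv⟩ := Int.exists_card_divisors_le_mul_rpow hε
  refine ⟨9 * K, by positivity, fun A B C D hA hB hC hD _ => ?_⟩
  have hsplit : UTriples A B C D =
      {t ∈ UTriples A B C D | t.2.2 = 0} ∪ {t ∈ UTriples A B C D | t.2.2 ≠ 0} := by
    ext t
    by_cases t.2.2 = 0 <;> simp [*]
  have hU := (congrArg Set.ncard hsplit).trans_le (Set.ncard_union_le _ _)
  have hP : 0 ≤ (A * C) ^ ε := by positivity
  calc (U A B C D : ℝ)
      ≤ (2 * A + 1) * (2 * √D + 1) + (2 * B + 1) * (2 * D + 1) * (K * (A * C) ^ ε) := by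
        rw [U_eq_ncard_UTriples]
        refine (Nat.cast_le.mpr hU).trans ?_
        push_cast
        gcongr
        · exact ncard_UTriples_snd_snd_eq_zero_le (by linarith)
        · exact ncard_UTriples_snd_snd_ne_zero_le (by linarith) hε.le hdiv (by linarith)
            (by linarith) (by linarith) hD
    _ ≤ 9 * (A * (1 + √D)) + 9 * (B * (1 + D)) * (K * (A * C) ^ ε) := by
        gcongr ?_ + ?_ * _
        · exact two_mul_add_one_mul_two_mul_add_one_le hA (Real.sqrt_nonneg D)
        · exact two_mul_add_one_mul_two_mul_add_one_le hB hD
    _ ≤ 9 * K * (A * (1 + √D) + B * (1 + D) * (A * C) ^ ε) := by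
        have : 0 ≤ A * (1 + √D) := by positivity
        nlinarith
end

section
/- Let q ≥ 2 and β be integers with gcd(2β, q) = 1. Then Σ_α e(β·\bar{α}²/q²) = 0, where the sum is over integers α with 1 ≤ α ≤ q² and gcd(α, q) = 1, and \bar{α} denotes any integer satisfying α·\bar{α} ≡ 1 (mod q²) (the summand does not depend on the choice of \bar{α}). -/
/-!
Reducing modulo `q²`, the sum becomes `∑ ψ(β x⁻¹²)` over the units `x` of `ℤ/q²ℤ`, where `ψ` is
the standard additive character; inversion permutes the units, so this is `S = ∑ ψ(β x²)`.
Since `(q t)² = 0` in `ℤ/q²ℤ`, translation by `q t` also permutes the units and turns `ψ(β x²)` into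
`ψ(β x²) ψ(2β q x t)`. Averaging over all `t`, each term is killed by the character sum
`∑ₜ ψ(2β q x t) = 0`, as `2β x` is a unit and `q ≠ 0` in `ℤ/q²ℤ`; hence `q² S = 0`.
-/

noncomputable def e (x : ℝ) : ℂ := Complex.exp (2 * Real.pi * Complex.I * x)

open Finset

theorem isUnit_add_iff_of_isNilpotent {R : Type*} [CommRing R] {x r : R} (hr : IsNilpotent r) :
    IsUnit (x + r) ↔ IsUnit x :=
  ⟨fun h => by simpa using hr.neg.isUnit_add_left_of_commute h (Commute.all _ _),
    fun h => hr.isUnit_add_left_of_commute h (Commute.all _ _)⟩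

theorem sum_filter_isUnit_ringInverse {M₀ M : Type*} [MonoidWithZero M₀] [Fintype M₀]
    [DecidablePred (IsUnit : M₀ → Prop)] [AddCommMonoid M] (f : M₀ → M) :
    ∑ x ∈ univ.filter IsUnit, f (Ring.inverse x) = ∑ x ∈ univ.filter IsUnit, f x :=
  sum_nbij' Ring.inverse Ring.inverse (by simp) (by simp)
    (fun _ hx => Ring.inverse_inverse (mem_filter.1 hx).2)
    (fun _ hx => Ring.inverse_inverse (mem_filter.1 hx).2) (fun _ _ => rfl)

theorem AddChar.sum_filter_isUnit_mul_sq_eq_zero {R R' : Type*} [CommRing R] [Fintype R]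
    [DecidableEq R] [DecidablePred (IsUnit : R → Prop)] [CommRing R'] [IsDomain R'] [CharZero R']
    {ψ : AddChar R R'} (hψ : ψ.IsPrimitive) {b ε : R} (hb : IsUnit (2 * b)) (hε : ε * ε = 0)
    (hε0 : ε ≠ 0) :
    ∑ x ∈ univ.filter IsUnit, ψ (b * x ^ 2) = 0 := by
  set S := ∑ x ∈ univ.filter IsUnit, ψ (b * x ^ 2)
  have htranslate (t : R) : ∑ x ∈ univ.filter IsUnit, ψ (b * (x + ε * t) ^ 2) = S := by
    have hnil : IsNilpotent (ε * t) := ⟨2, by rw [mul_pow, sq, hε, zero_mul]⟩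
    exact sum_equiv (Equiv.addRight (ε * t)) (by simp [isUnit_add_iff_of_isNilpotent hnil])
      (fun _ _ => rfl)
  have hexpand (x t : R) :
      ψ (b * (x + ε * t) ^ 2) = ψ (b * x ^ 2) * ψ (t * (2 * b * x * ε)) := by
    rw [← AddChar.map_add_eq_mul]
    congr 1
    linear_combination (b * t ^ 2) * hε
  have hfreq {x : R} (hx : IsUnit x) : 2 * b * x * ε ≠ 0 := by
    rwa [Ne, (hb.mul hx).mul_right_eq_zero]
  have hcard : (Fintype.card R : R') * S = 0 :=
    calc (Fintype.card R : R') * S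
          = ∑ t : R, ∑ x ∈ univ.filter IsUnit, ψ (b * (x + ε * t) ^ 2) := by simp [htranslate]
      _ = ∑ x ∈ univ.filter IsUnit, ψ (b * x ^ 2) * ∑ t : R, ψ (t * (2 * b * x * ε)) := by
          rw [sum_comm]
          simp only [hexpand, mul_sum]
      _ = 0 := sum_eq_zero fun x hx => by
          rw [AddChar.sum_mulShift _ hψ, if_neg (hfreq (mem_filter.1 hx).2), Nat.cast_zero,
            mul_zero]
  exact (mul_eq_zero.1 hcard).resolve_left (Nat.cast_ne_zero.2 Fintype.card_ne_zero)

theorem ZMod.sum_Icc_intCast {M : Type*} [AddCommMonoid M] (N : ℕ) [NeZero N]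
    (f : ZMod N → M) : ∑ α ∈ Icc (1 : ℤ) N, f α = ∑ x, f x := by
  have hinj : Set.InjOn (Int.cast : ℤ → ZMod N) (Icc (1 : ℤ) N) := by
    intro a ha b hb hab
    rw [coe_Icc, Set.mem_Icc] at ha hb
    rw [ZMod.intCast_eq_intCast_iff_dvd_sub] at hab
    have := Int.eq_zero_of_abs_lt_dvd hab (by rw [abs_lt]; omega)
    omega
  rw [← sum_image hinj, eq_univ_of_card (image _ _) (by simp [card_image_of_injOn hinj])]

theorem ZMod.intCast_eq_ringInverse_of_dvd {N : ℕ} {a b : ℤ} (h : (N : ℤ) ∣ a * b - 1) :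
    (b : ZMod N) = Ring.inverse (a : ZMod N) := by
  have hab : (a : ZMod N) * b = 1 := by
    have := (ZMod.intCast_zmod_eq_zero_iff_dvd _ N).2 h
    push_cast at this
    linear_combination this
  calc (b : ZMod N) = Ring.inverse (a : ZMod N) * (a * b) :=
        (Ring.inverse_mul_cancel_left _ _ (.of_mul_eq_one _ hab)).symm
    _ = Ring.inverse (a : ZMod N) := by rw [hab, mul_one]

theorem ZMod.isUnit_intCast_pow_iff {n k : ℕ} (hk : k ≠ 0) (a : ℤ) :
    IsUnit (a : ZMod (n ^ k)) ↔ IsCoprime a n := by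
  rw [ZMod.coe_int_isUnit_iff_isCoprime, Nat.cast_pow,
    IsCoprime.pow_left_iff (Nat.pos_of_ne_zero hk), isCoprime_comm]

theorem e_intCast_div_natCast (j : ℤ) (N : ℕ) [NeZero N] :
    e (j / N) = ZMod.stdAddChar (j : ZMod N) := by
  rw [ZMod.stdAddChar_coe, e]
  push_cast
  ring_nf

/-- For integers `q ≥ 2` and `β` with `gcd(2β, q) = 1`, and any choice `inv α` of an
integer inverse of `α` modulo `q²` (for each `α` coprime to `q`):
`Σ_{1 ≤ α ≤ q², gcd(α,q)=1} e(β (inv α)²/q²) = 0`. -/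
theorem salie_type_sum_vanishes (q β : ℤ) (hq : 2 ≤ q)
    (hcop : Int.gcd (2 * β) q = 1)
    (inv : ℤ → ℤ) (hinv : ∀ α : ℤ, Int.gcd α q = 1 → (q ^ 2 : ℤ) ∣ α * inv α - 1) :
    ∑ α ∈ Finset.filter (fun α : ℤ => Int.gcd α q = 1) (Finset.Icc 1 (q ^ 2)),
      e ((β : ℝ) * ((inv α : ℝ)) ^ 2 / (q : ℝ) ^ 2) = 0 := by
  lift q to ℕ using (by omega)
  have : NeZero (q ^ 2) := ⟨pow_ne_zero 2 (by omega)⟩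
  classical
  have hunit (α : ℤ) : Int.gcd α q = 1 ↔ IsUnit (α : ZMod (q ^ 2)) := by
    rw [ZMod.isUnit_intCast_pow_iff two_ne_zero, Int.isCoprime_iff_gcd_eq_one]
  have hsummand (α : ℤ) (hα : Int.gcd α q = 1) :
      e ((β : ℝ) * ((inv α : ℝ)) ^ 2 / ((q : ℤ) : ℝ) ^ 2)
        = ZMod.stdAddChar ((β : ZMod (q ^ 2)) * Ring.inverse (α : ZMod (q ^ 2)) ^ 2) := by
    rw [← ZMod.intCast_eq_ringInverse_of_dvd (by exact_mod_cast hinv α hα),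
      show (β : ZMod (q ^ 2)) * (inv α : ZMod (q ^ 2)) ^ 2 = ((β * inv α ^ 2 : ℤ) : ZMod (q ^ 2))
        by push_cast; rfl, ← e_intCast_div_natCast]
    push_cast
    rfl
  have hb : IsUnit (2 * (β : ZMod (q ^ 2))) := by
    rw [← Int.cast_ofNat, ← Int.cast_mul, ZMod.isUnit_intCast_pow_iff two_ne_zero,
      Int.isCoprime_iff_gcd_eq_one, hcop]
  have hε : (q : ZMod (q ^ 2)) * q = 0 := by rw [← Nat.cast_mul, ← sq, ZMod.natCast_self]
  have hε0 : (q : ZMod (q ^ 2)) ≠ 0 := by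
    rw [Ne, ZMod.natCast_eq_zero_iff]
    intro h
    have := Nat.le_of_dvd (by omega) h
    nlinarith
  calc _ = ∑ α ∈ (Icc 1 ((q ^ 2 : ℕ) : ℤ)).filter (fun α : ℤ => IsUnit (α : ZMod (q ^ 2))),
          ZMod.stdAddChar ((β : ZMod (q ^ 2)) * Ring.inverse (α : ZMod (q ^ 2)) ^ 2) := by
        push_cast
        exact sum_congr (filter_congr fun α _ => hunit α)
          fun α hα => hsummand α ((hunit α).2 (mem_filter.1 hα).2)
    _ = ∑ x ∈ univ.filter IsUnit, ZMod.stdAddChar ((β : ZMod (q ^ 2)) * Ring.inverse x ^ 2) := by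
        rw [sum_filter, sum_filter]
        exact ZMod.sum_Icc_intCast (q ^ 2)
          fun x => if IsUnit x then ZMod.stdAddChar ((β : ZMod (q ^ 2)) * Ring.inverse x ^ 2)
            else 0
    _ = ∑ x ∈ univ.filter IsUnit, ZMod.stdAddChar ((β : ZMod (q ^ 2)) * x ^ 2) :=
        sum_filter_isUnit_ringInverse fun x => ZMod.stdAddChar ((β : ZMod (q ^ 2)) * x ^ 2)
    _ = 0 := AddChar.sum_filter_isUnit_mul_sq_eq_zero (ZMod.isPrimitive_stdAddChar _) hb hε hε0
end

section
/- Let l ≥ 1 be a squarefree integer and let d be an integer with gcd(l, 2d) = 1. Then Σ_{0 ≤ x < l, l ∣ x² − d²} e((x³ − 3d²x)/l²) = Σ_{l₁·l₂ = l, l₁, l₂ ≥ 1} e(2d³·(\bar{l₁²}/l₂² − \bar{l₂²}/l₁²)), where \bar{l₁²} denotes any integer inverse of l₁² modulo l₂² and \bar{l₂²} denotes any integer inverse of l₂² modulo l₁² (the summands on the right do not depend on these choices of inverses). -/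
/-!
For squarefree `l` prime to `2d`, the solutions `x mod l` of `x² ≡ d²` correspond bijectively,
via `l₁ = gcd(l, x - d)`, to the factorizations `l = l₁ l₂`: `x` is the Chinese-remainder solution
of `x ≡ d (mod l₁)`, `x ≡ -d (mod l₂)`. For such `x` the identity
`x³ - 3d²x ± 2d³ = (x ∓ d)²(x ± 2d)` gives `x³ - 3d²x ≡ 2d³ (u l₁² - v l₂²) (mod l₁² l₂²)`
for the inverses `u`, `v`, and dividing by `l² = l₁² l₂²` turns both sides into the same exponential.
-/

lemma e_add_intCast (x : ℝ) (k : ℤ) : e (x + k) = e x := by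
  rw [e, e, Complex.ofReal_add, mul_add, Complex.exp_add, Complex.ofReal_intCast,
    mul_comm _ (k : ℂ), Complex.exp_int_mul_two_pi_mul_I, mul_one]

lemma e_intCast_div_eq_of_dvd_sub {a b m : ℤ} (h : m ∣ a - b) :
    e ((a : ℝ) / m) = e ((b : ℝ) / m) := by
  obtain ⟨k, hk⟩ := h
  rcases eq_or_ne m 0 with rfl | hm
  · simp
  · have hk' : (a : ℝ) = b + m * k := by exact_mod_cast (sub_eq_iff_eq_add'.mp hk)
    rw [hk', add_div, mul_div_cancel_left₀ _ (Int.cast_ne_zero.mpr hm), e_add_intCast]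

lemma sq_dvd_cubic_add_of_dvd_sub {l x d w : ℤ} (h : l ∣ x - d) (hw : l ^ 2 ∣ w - 1) :
    l ^ 2 ∣ x ^ 3 - 3 * d ^ 2 * x + 2 * d ^ 3 * w := by
  rw [show x ^ 3 - 3 * d ^ 2 * x + 2 * d ^ 3 * w =
    (x - d) ^ 2 * (x + 2 * d) + 2 * d ^ 3 * (w - 1) by ring]
  exact ((pow_dvd_pow_of_dvd h 2).mul_right _).add (hw.mul_left _)

lemma sq_mul_sq_dvd_cubic_sub {l₁ l₂ x d u v : ℤ} (hc : IsCoprime l₁ l₂)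
    (h₁ : l₁ ∣ x - d) (h₂ : l₂ ∣ x + d)
    (hu : l₂ ^ 2 ∣ l₁ ^ 2 * u - 1) (hv : l₁ ^ 2 ∣ l₂ ^ 2 * v - 1) :
    (l₁ * l₂) ^ 2 ∣ x ^ 3 - 3 * d ^ 2 * x - 2 * d ^ 3 * (u * l₁ ^ 2 - v * l₂ ^ 2) := by
  rw [mul_pow]
  refine hc.pow.mul_dvd ?_ ?_
  · have hw : l₁ ^ 2 ∣ (v * l₂ ^ 2 - u * l₁ ^ 2) - 1 := by
      rw [show (v * l₂ ^ 2 - u * l₁ ^ 2) - 1 = (l₂ ^ 2 * v - 1) - l₁ ^ 2 * u by ring]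
      exact dvd_sub hv (dvd_mul_right _ u)
    rw [show x ^ 3 - 3 * d ^ 2 * x - 2 * d ^ 3 * (u * l₁ ^ 2 - v * l₂ ^ 2) =
      x ^ 3 - 3 * d ^ 2 * x + 2 * d ^ 3 * (v * l₂ ^ 2 - u * l₁ ^ 2) by ring]
    exact sq_dvd_cubic_add_of_dvd_sub h₁ hw
  · have hw : l₂ ^ 2 ∣ (u * l₁ ^ 2 - v * l₂ ^ 2) - 1 := by
      rw [show (u * l₁ ^ 2 - v * l₂ ^ 2) - 1 = (l₁ ^ 2 * u - 1) - l₂ ^ 2 * v by ring]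
      exact dvd_sub hu (dvd_mul_right _ v)
    rw [show x ^ 3 - 3 * d ^ 2 * x - 2 * d ^ 3 * (u * l₁ ^ 2 - v * l₂ ^ 2) =
      x ^ 3 - 3 * (-d) ^ 2 * x + 2 * (-d) ^ 3 * (u * l₁ ^ 2 - v * l₂ ^ 2) by ring]
    exact sq_dvd_cubic_add_of_dvd_sub (by rwa [sub_neg_eq_add]) hw

lemma e_cubic_div_sq_eq {l l₁ l₂ : ℕ} {x d u v : ℤ} (hl : l₁ * l₂ = l) (hl0 : l ≠ 0)
    (hc : Nat.Coprime l₁ l₂) (h₁ : (l₁ : ℤ) ∣ x - d) (h₂ : (l₂ : ℤ) ∣ x + d)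
    (hu : (l₂ : ℤ) ^ 2 ∣ (l₁ : ℤ) ^ 2 * u - 1) (hv : (l₁ : ℤ) ^ 2 ∣ (l₂ : ℤ) ^ 2 * v - 1) :
    e (((x : ℝ) ^ 3 - 3 * (d : ℝ) ^ 2 * x) / (l : ℝ) ^ 2) =
      e (2 * (d : ℝ) ^ 3 * ((u : ℝ) / (l₂ : ℝ) ^ 2 - (v : ℝ) / (l₁ : ℝ) ^ 2)) := by
  have hl₁ : (l₁ : ℝ) ≠ 0 := by exact_mod_cast left_ne_zero_of_mul (hl ▸ hl0)
  have hl₂ : (l₂ : ℝ) ≠ 0 := by exact_mod_cast right_ne_zero_of_mul (hl ▸ hl0)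
  have hrhs : 2 * (d : ℝ) ^ 3 * ((u : ℝ) / (l₂ : ℝ) ^ 2 - (v : ℝ) / (l₁ : ℝ) ^ 2) =
      ((2 * d ^ 3 * (u * l₁ ^ 2 - v * l₂ ^ 2) : ℤ) : ℝ) / (((l₁ * l₂ : ℤ) ^ 2 : ℤ) : ℝ) := by
    push_cast
    field_simp
  have hlhs : ((x : ℝ) ^ 3 - 3 * (d : ℝ) ^ 2 * x) / (l : ℝ) ^ 2 =
      ((x ^ 3 - 3 * d ^ 2 * x : ℤ) : ℝ) / (((l₁ * l₂ : ℤ) ^ 2 : ℤ) : ℝ) := by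
    rw [← hl]; push_cast; rfl
  rw [hlhs, hrhs, e_intCast_div_eq_of_dvd_sub]
  exact sq_mul_sq_dvd_cubic_sub (Nat.isCoprime_iff_coprime.mpr hc) h₁ h₂ hu hv

lemma coprime_div_of_squarefree {l l₁ : ℕ} (hsf : Squarefree l) (h : l₁ ∣ l) :
    Nat.Coprime l₁ (l / l₁) :=
  Nat.coprime_of_squarefree_mul (by rwa [Nat.mul_div_cancel' h])

lemma IsCoprime.exists_dvd_sub_and_dvd_add {a b : ℤ} (h : IsCoprime a b) (d : ℤ) :
    ∃ y, a ∣ y - d ∧ b ∣ y + d := by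
  obtain ⟨m, n, hmn⟩ := h
  exact ⟨d * (n * b - m * a), ⟨-2 * d * m, by linear_combination d * hmn⟩,
    ⟨2 * d * n, by linear_combination -d * hmn⟩⟩

lemma div_gcd_sub_dvd_add {l : ℕ} {x d : ℤ} (hl : l ≠ 0) (hx : (l : ℤ) ∣ x ^ 2 - d ^ 2) :
    ((l / Int.gcd l (x - d) : ℕ) : ℤ) ∣ x + d := by
  set g := Int.gcd l (x - d)
  have hg : 0 < g := Int.gcd_pos_of_ne_zero_left _ (by exact_mod_cast hl)
  have hgl : (g : ℤ) ∣ l := Int.gcd_dvd_left _ _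
  have hgx : (g : ℤ) ∣ x - d := Int.gcd_dvd_right _ _
  have hcop : IsCoprime ((l : ℤ) / g) ((x - d) / g) :=
    Int.isCoprime_iff_gcd_eq_one.mpr (Int.gcd_div_gcd_div_gcd hg)
  rw [Int.natCast_div]
  refine hcop.dvd_of_dvd_mul_left
    (Int.dvd_of_mul_dvd_mul_right (a := g) (by exact_mod_cast hg.ne') ?_)
  rwa [mul_right_comm, Int.ediv_mul_cancel hgx, Int.ediv_mul_cancel hgl, mul_comm, ← sq_sub_sq]

lemma gcd_sub_eq_of_dvd {l₁ l₂ : ℕ} {x d : ℤ} (hcop : IsCoprime (l₂ : ℤ) (2 * d))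
    (h₁ : (l₁ : ℤ) ∣ x - d) (h₂ : (l₂ : ℤ) ∣ x + d) :
    Int.gcd ((l₁ * l₂ : ℕ) : ℤ) (x - d) = l₁ := by
  obtain ⟨k, hk⟩ := h₁
  obtain ⟨m, hm⟩ := h₂
  have hxd : IsCoprime (l₂ : ℤ) (x - d) := by
    rw [show x - d = -(2 * d) + l₂ * m by linear_combination hm]
    exact hcop.neg_right.add_mul_left_right m
  rw [hk] at hxd
  rw [hk, Nat.cast_mul, Int.gcd_mul_left, Int.isCoprime_iff_gcd_eq_one.mp hxd.of_mul_right_right]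
  simp

lemma eq_of_gcd_sub_eq {l x y : ℕ} {d : ℤ} (hsf : Squarefree l) (hx : x < l) (hy : y < l)
    (hxd : (l : ℤ) ∣ (x : ℤ) ^ 2 - d ^ 2) (hyd : (l : ℤ) ∣ (y : ℤ) ^ 2 - d ^ 2)
    (hg : Int.gcd l (x - d) = Int.gcd l (y - d)) : x = y := by
  set g := Int.gcd l (x - d)
  have hgl : g ∣ l := Int.natCast_dvd_natCast.mp (Int.gcd_dvd_left _ _)
  have h₁ : (g : ℤ) ∣ x - y := by
    rw [show (x : ℤ) - y = (x - d) - (y - d) by ring]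
    exact dvd_sub (Int.gcd_dvd_right _ _) (hg ▸ Int.gcd_dvd_right _ _)
  have h₂ : ((l / g : ℕ) : ℤ) ∣ x - y := by
    rw [show (x : ℤ) - y = (x + d) - (y + d) by ring]
    exact dvd_sub (div_gcd_sub_dvd_add hsf.ne_zero hxd) (hg ▸ div_gcd_sub_dvd_add hsf.ne_zero hyd)
  have hl : (l : ℤ) ∣ x - y := by
    have := (Nat.isCoprime_iff_coprime.mpr (coprime_div_of_squarefree hsf hgl)).mul_dvd h₁ h₂
    rwa [← Nat.cast_mul, Nat.mul_div_cancel' hgl] at this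
  exact ((Nat.modEq_iff_dvd.mpr hl).eq_of_lt_of_lt hy hx).symm

lemma exists_gcd_sub_eq {l l₁ : ℕ} {d : ℤ} (hsf : Squarefree l)
    (hcop : IsCoprime (l : ℤ) (2 * d)) (h : l₁ ∣ l) :
    ∃ x < l, (l : ℤ) ∣ (x : ℤ) ^ 2 - d ^ 2 ∧ Int.gcd l (x - d) = l₁ := by
  have hll : l₁ * (l / l₁) = l := Nat.mul_div_cancel' h
  obtain ⟨y, hy₁, hy₂⟩ :=
    (Nat.isCoprime_iff_coprime.mpr (coprime_div_of_squarefree hsf h)).exists_dvd_sub_and_dvd_add d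
  have hl : (0 : ℤ) < l := by exact_mod_cast Nat.pos_of_ne_zero hsf.ne_zero
  have hx₁ : (l₁ : ℤ) ∣ y % l - d := by
    rw [show y % l - d = (y - d) - (y - y % l) by ring]
    exact dvd_sub hy₁ ((Int.natCast_dvd_natCast.mpr h).trans Int.dvd_self_sub_emod)
  have hx₂ : ((l / l₁ : ℕ) : ℤ) ∣ y % l + d := by
    rw [show y % l + d = (y + d) - (y - y % l) by ring]
    exact dvd_sub hy₂ ((Int.natCast_dvd_natCast.mpr (Nat.div_dvd_of_dvd h)).trans
      Int.dvd_self_sub_emod)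
  have hx₀ : 0 ≤ y % l := Int.emod_nonneg y hl.ne'
  refine ⟨(y % l).toNat, (Int.toNat_lt hx₀).mpr (Int.emod_lt_of_pos y hl), ?_, ?_⟩ <;>
    rw [Int.toNat_of_nonneg hx₀]
  · rw [sq_sub_sq]
    nth_rw 1 [← hll]
    rw [Nat.cast_mul, mul_comm]
    exact mul_dvd_mul hx₂ hx₁
  · nth_rw 1 [← hll]
    exact gcd_sub_eq_of_dvd
      (hcop.of_isCoprime_of_dvd_left (Int.natCast_dvd_natCast.mpr (Nat.div_dvd_of_dvd h))) hx₁ hx₂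

theorem squarefree_modulus_sum_factorization_general (l : ℕ) (hsf : Squarefree l)
    (d : ℤ) (hcop : Int.gcd (l : ℤ) (2 * d) = 1)
    (u v : ℕ → ℤ)
    (hu : ∀ l₁ : ℕ, l₁ ∣ l → (((l / l₁ : ℕ) : ℤ)) ^ 2 ∣ (l₁ : ℤ) ^ 2 * u l₁ - 1)
    (hv : ∀ l₁ : ℕ, l₁ ∣ l → ((l₁ : ℤ)) ^ 2 ∣ (((l / l₁ : ℕ) : ℤ)) ^ 2 * v l₁ - 1) :
    ∑ x ∈ Finset.filter (fun x : ℕ => (l : ℤ) ∣ (x : ℤ) ^ 2 - d ^ 2) (Finset.range l),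
      e (((x : ℝ) ^ 3 - 3 * (d : ℝ) ^ 2 * (x : ℝ)) / (l : ℝ) ^ 2) =
    ∑ l₁ ∈ l.divisors,
      e (2 * (d : ℝ) ^ 3 *
        ((u l₁ : ℝ) / ((l / l₁ : ℕ) : ℝ) ^ 2 - (v l₁ : ℝ) / (l₁ : ℝ) ^ 2)) := by
  have hgcd_dvd (x : ℤ) : Int.gcd l x ∣ l := Int.natCast_dvd_natCast.mp (Int.gcd_dvd_left _ _)
  refine Finset.sum_bij (fun x _ => Int.gcd l ((x : ℤ) - d)) ?_ ?_ ?_ ?_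
  · intro x _
    exact Nat.mem_divisors.mpr ⟨hgcd_dvd _, hsf.ne_zero⟩
  · intro x hx y hy hxy
    simp only [Finset.mem_filter, Finset.mem_range] at hx hy
    exact eq_of_gcd_sub_eq hsf hx.1 hy.1 hx.2 hy.2 hxy
  · intro l₁ hl₁
    obtain ⟨x, hxl, hxd, hx⟩ :=
      exists_gcd_sub_eq hsf (Int.isCoprime_iff_gcd_eq_one.mpr hcop) (Nat.dvd_of_mem_divisors hl₁)
    exact ⟨x, Finset.mem_filter.mpr ⟨Finset.mem_range.mpr hxl, hxd⟩, hx⟩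
  · intro x hx
    have hg := hgcd_dvd ((x : ℤ) - d)
    exact_mod_cast e_cubic_div_sq_eq (Nat.mul_div_cancel' hg) hsf.ne_zero
      (coprime_div_of_squarefree hsf hg) (Int.gcd_dvd_right _ _)
      (div_gcd_sub_dvd_add hsf.ne_zero (Finset.mem_filter.mp hx).2) (hu _ hg) (hv _ hg)

/-- Let `l ≥ 1` be squarefree and `d` an integer with `gcd(l, 2d) = 1`. For any choices
`u l₁` of an integer inverse of `l₁²` modulo `(l/l₁)²` and `v l₁` of an integer inverse
of `(l/l₁)²` modulo `l₁²`, one has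
`Σ_{0 ≤ x < l, l ∣ x² − d²} e((x³ − 3d²x)/l²)
  = Σ_{l₁ l₂ = l} e(2d³ (u l₁/l₂² − v l₁/l₁²))`. -/
theorem squarefree_modulus_sum_factorization (l : ℕ) (hl : 1 ≤ l) (hsf : Squarefree l)
    (d : ℤ) (hcop : Int.gcd (l : ℤ) (2 * d) = 1)
    (u v : ℕ → ℤ)
    (hu : ∀ l₁ : ℕ, l₁ ∣ l → (((l / l₁ : ℕ) : ℤ)) ^ 2 ∣ (l₁ : ℤ) ^ 2 * u l₁ - 1)
    (hv : ∀ l₁ : ℕ, l₁ ∣ l → ((l₁ : ℤ)) ^ 2 ∣ (((l / l₁ : ℕ) : ℤ)) ^ 2 * v l₁ - 1) :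
    ∑ x ∈ Finset.filter (fun x : ℕ => (l : ℤ) ∣ (x : ℤ) ^ 2 - d ^ 2) (Finset.range l),
      e (((x : ℝ) ^ 3 - 3 * (d : ℝ) ^ 2 * (x : ℝ)) / (l : ℝ) ^ 2) =
    ∑ l₁ ∈ l.divisors,
      e (2 * (d : ℝ) ^ 3 *
        ((u l₁ : ℝ) / ((l / l₁ : ℕ) : ℝ) ^ 2 - (v l₁ : ℝ) / (l₁ : ℝ) ^ 2)) :=
  squarefree_modulus_sum_factorization_general l hsf d hcop u v hu hv
end
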